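/- Danskin derivative of the expert summary: assume conditions (N1), (Q1), (Q2), and for (u,v) ∈ [0,C]² not both zero let t*(u,v) denote the unique minimizer of t ↦ ν(u)·G(t)·Φ₀(U(t)) + ν(v)·G(t)·Φ₁(U(t)). Then for every fixed u ∈ (0, C), the map v ↦ F(u, v) is differentiable at every v ∈ (0, C) with derivative (∂F/∂v)(u,v) = ν′(v)·G(t*(u,v))·Φ₁(U(t*(u,v))), and this derivative is strictly positive. -/

import Mathlib

/-- Logistic envelope `Φ₀(u) = log(1 + e^{-u})`. -/
noncomputable def Phi0 (u : ℝ) : ℝ := Real.log (1 + Real.exp (-u))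

/-- Logistic envelope `Φ₁(u) = log(1 + e^{u})`. -/
noncomputable def Phi1 (u : ℝ) : ℝ := Real.log (1 + Real.exp u)

/-- Row objective `t ↦ ν(u)·G(t)·Φ₀(U(t)) + ν(v)·G(t)·Φ₁(U(t))`. -/
noncomputable def rowObj (ν G U : ℝ → ℝ) (u v t : ℝ) : ℝ :=
  ν u * G t * Phi0 (U t) + ν v * G t * Phi1 (U t)

/-- Expert summary `F(u,v) = inf_t rowObj ν G U u v t`. -/
noncomputable def expertSummary (ν G U : ℝ → ℝ) (u v : ℝ) : ℝ :=
  ⨅ t : ℝ, rowObj ν G U u v t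

/-! Writing the row objective as `a t + ν w * b t` with `b t = G t * Φ₁ (U t)`, the summary is
an infimum of functions affine in `ν w`. Evaluating each objective at the other's minimizer
gives `(ν w - ν v) * b (t* w) ≤ F w - F v ≤ (ν w - ν v) * b (t* v)`, so (Danskin) the derivative
is `ν' v * b (t* v)` once the minimizer is continuous in `w`. That continuity comes from convexity:
the strict minimum at `t* v` still beats the values at `t* v ± ε` for `w` near `v`, and a convex
function cannot attain its minimum beyond a point where it exceeds its value at `t* v`. -/

open Filter Topology Asymptotics Set

theorem ConvexOn.notMem_segment_of_lt {E : Type*} [AddCommGroup E] [Module ℝ E]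
    {s : Set E} {g : E → ℝ} (hg : ConvexOn ℝ s g) {x y z : E} (hx : x ∈ s) (hy : y ∈ s)
    (hz : g x < g z) (hyx : g y ≤ g x) : z ∉ segment ℝ x y := fun hseg =>
  (hg.le_on_segment hx hy hseg).not_gt ((max_le le_rfl hyx).trans_lt hz)

theorem continuousAt_minimizer_of_convexOn {α : Type*} [TopologicalSpace α]
    {f : α → ℝ → ℝ} {m : α → ℝ} {v : α} (hf : ∀ t, ContinuousAt (f · t) v)
    (hstrict : ∀ s ≠ m v, f v (m v) < f v s)
    (hmin : ∀ᶠ w in 𝓝 v, ConvexOn ℝ univ (f w) ∧ ∀ s, f w (m w) ≤ f w s) :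
    ContinuousAt m v := by
  rw [Metric.continuousAt_iff']
  intro ε hε
  have gap : ∀ s ≠ m v, ∀ᶠ w in 𝓝 v, f w (m v) < f w s := fun s hs =>
    (hf (m v)).eventually_lt (hf s) (hstrict s hs)
  filter_upwards [gap (m v - ε) (by linarith), gap (m v + ε) (by linarith), hmin]
    with w hlo hhi ⟨hconv, hw⟩
  rw [Real.dist_eq, abs_sub_lt_iff]
  constructor
  · by_contra! h
    exact hconv.notMem_segment_of_lt (mem_univ _) (mem_univ _) hhi (hw _)
      (by rw [segment_eq_Icc (by linarith)]; constructor <;> linarith)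
  · by_contra! h
    exact hconv.notMem_segment_of_lt (mem_univ _) (mem_univ _) hlo (hw _)
      (by rw [segment_symm, segment_eq_Icc (by linarith)]; constructor <;> linarith)

theorem HasDerivAt.iInf_add_mul {X : Type*} {a b : X → ℝ} {ν : ℝ → ℝ} {m : ℝ → X}
    {v ν' : ℝ} (hν : HasDerivAt ν ν' v) (hbm : ContinuousAt (fun w => b (m w)) v)
    (hmin : ∀ᶠ w in 𝓝 v, ∀ t, a (m w) + ν w * b (m w) ≤ a t + ν w * b t) :
    HasDerivAt (fun w => ⨅ t, a t + ν w * b t) (ν' * b (m v)) v := by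
  have : Nonempty X := ⟨m v⟩
  set F := fun w => ⨅ t, a t + ν w * b t
  have hF : ∀ᶠ w in 𝓝 v, F w = a (m w) + ν w * b (m w) := hmin.mono fun w hw =>
    le_antisymm (ciInf_le ⟨_, forall_mem_range.2 hw⟩ _) (le_ciInf hw)
  have hv := hmin.self_of_nhds
  have hFv := hF.self_of_nhds
  have hsandwich : ∀ᶠ w in 𝓝 v, ‖F w - F v - (ν w - ν v) * b (m v)‖ ≤
      ‖(ν w - ν v) * (b (m w) - b (m v))‖ := by
    filter_upwards [hmin, hF] with w hw hFw
    have upper := hw (m v)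
    have lower := hv (m w)
    rw [Real.norm_eq_abs, Real.norm_eq_abs, abs_le]
    constructor <;> linarith [neg_abs_le ((ν w - ν v) * (b (m w) - b (m v))),
      le_abs_self ((ν w - ν v) * (b (m w) - b (m v)))]
  have hsmall : (fun w => (ν w - ν v) * (b (m w) - b (m v))) =o[𝓝 v] (fun w => w - v) := by
    simpa using hν.isBigO_sub.mul_isLittleO
      (isLittleO_one_iff (F := ℝ) |>.2 (tendsto_sub_nhds_zero_iff.2 hbm))
  rw [hasDerivAt_iff_isLittleO]
  refine ((IsBigO.of_bound 1 (by simpa using hsandwich)).trans_isLittleO hsmall |>.add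
    ((hasDerivAt_iff_isLittleO.1 hν).const_mul_left (b (m v)))).congr_left fun w => ?_
  simp only [smul_eq_mul]
  ring

theorem Phi1_pos (x : ℝ) : 0 < Phi1 x :=
  Real.log_pos (by linarith [Real.exp_pos x])

theorem continuous_Phi1 : Continuous Phi1 :=
  (continuous_const.add Real.continuous_exp).log fun x => (add_pos one_pos (Real.exp_pos x)).ne'

theorem danskin_derivative_expert_summary_general
    (C : ℝ)
    -- (N1)
    (ν ν' : ℝ → ℝ)
    (hνderiv : ∀ u ∈ Set.Ioo 0 C, HasDerivAt ν (ν' u) u)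
    (hν'pos : ∀ u ∈ Set.Ioo 0 C, 0 < ν' u)
    -- (Q1)
    (G U : ℝ → ℝ)
    (hGcont : Continuous G) (hGpos : ∀ t, 0 < G t)
    (hUcont : Continuous U)
    -- (Q2)
    (hQ2 : ∀ u ∈ Set.Icc 0 C, ∀ v ∈ Set.Icc 0 C, ¬(u = 0 ∧ v = 0) →
      Filter.Tendsto (fun t => rowObj ν G U u v t) (Filter.cocompact ℝ) Filter.atTop ∧
      StrictConvexOn ℝ Set.univ (fun t => rowObj ν G U u v t))
    -- `tstar u v` is the unique minimizer of the row objective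
    (tstar : ℝ → ℝ → ℝ)
    (htstar : ∀ u ∈ Set.Icc 0 C, ∀ v ∈ Set.Icc 0 C, ¬(u = 0 ∧ v = 0) →
      (∀ s : ℝ, rowObj ν G U u v (tstar u v) ≤ rowObj ν G U u v s) ∧
      (∀ t : ℝ, (∀ s : ℝ, rowObj ν G U u v t ≤ rowObj ν G U u v s) → t = tstar u v)) :
    ∀ u ∈ Set.Ioo (0 : ℝ) C, ∀ v ∈ Set.Ioo (0 : ℝ) C,
      HasDerivAt (fun v' => expertSummary ν G U u v')
        (ν' v * G (tstar u v) * Phi1 (U (tstar u v))) v ∧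
      0 < ν' v * G (tstar u v) * Phi1 (U (tstar u v)) := by
  intro u hu v hv
  set b : ℝ → ℝ := fun t => G t * Phi1 (U t)
  have hrow : ∀ w t, rowObj ν G U u w t = ν u * G t * Phi0 (U t) + ν w * b t := by
    intro w t; simp only [rowObj, b]; ring
  have hne : ∀ w : ℝ, ¬(u = 0 ∧ w = 0) := fun w h => hu.1.ne' h.1
  have huI : u ∈ Icc 0 C := Ioo_subset_Icc_self hu
  have hmin : ∀ᶠ w in 𝓝 v, ConvexOn ℝ univ (rowObj ν G U u w) ∧
      ∀ s, rowObj ν G U u w (tstar u w) ≤ rowObj ν G U u w s := by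
    filter_upwards [Icc_mem_nhds hv.1 hv.2] with w hw
    exact ⟨(hQ2 u huI w hw (hne w)).2.convexOn, (htstar u huI w hw (hne w)).1⟩
  have hstrict : ∀ s ≠ tstar u v, rowObj ν G U u v (tstar u v) < rowObj ν G U u v s :=
    fun s hs => (hmin.self_of_nhds.2 s).lt_of_ne fun h =>
      hs ((htstar u huI v (Ioo_subset_Icc_self hv) (hne v)).2 s (h ▸ hmin.self_of_nhds.2))
  have hνv := hνderiv v hv
  have htstar_cont : ContinuousAt (tstar u) v :=
    continuousAt_minimizer_of_convexOn
      (fun t => by simp only [hrow]; exact continuousAt_const.add (hνv.continuousAt.mul_const _))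
      hstrict hmin
  have hb : Continuous b := hGcont.mul (continuous_Phi1.comp hUcont)
  have hderiv := hνv.iInf_add_mul (a := fun t => ν u * G t * Phi0 (U t)) (b := b)
    (m := tstar u) (hb.continuousAt.comp htstar_cont)
    (hmin.mono fun w hw => by simpa only [hrow] using hw.2)
  refine ⟨?_, mul_pos (mul_pos (hν'pos v hv) (hGpos _)) (Phi1_pos _)⟩
  rw [mul_assoc]
  simpa only [expertSummary, hrow] using hderiv

/-- **Danskin derivative of the expert summary.**
Under (N1), (Q1), (Q2), if `t*(u,v)` denotes the unique minimizer of the row objective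
for `(u,v) ∈ [0,C]²` not both zero, then for every fixed `u ∈ (0,C)` the map
`v ↦ F(u,v)` is differentiable at each `v ∈ (0,C)` with derivative
`ν′(v)·G(t*(u,v))·Φ₁(U(t*(u,v)))`, which is strictly positive. -/
theorem danskin_derivative_expert_summary
    (C : ℝ) (hC : 0 < C)
    -- (N1)
    (ν ν' : ℝ → ℝ)
    (hνcont : ContinuousOn ν (Set.Icc 0 C))
    (hνpos : ∀ u ∈ Set.Icc 0 C, 0 < ν u)
    (hνderiv : ∀ u ∈ Set.Ioo 0 C, HasDerivAt ν (ν' u) u)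
    (hν'pos : ∀ u ∈ Set.Ioo 0 C, 0 < ν' u)
    -- (Q1)
    (G U : ℝ → ℝ)
    (hGcont : Continuous G) (hGpos : ∀ t, 0 < G t)
    (hUcont : Continuous U) (hUmono : StrictMono U) (hUsurj : Function.Surjective U)
    -- (Q2)
    (hQ2 : ∀ u ∈ Set.Icc 0 C, ∀ v ∈ Set.Icc 0 C, ¬(u = 0 ∧ v = 0) →
      Filter.Tendsto (fun t => rowObj ν G U u v t) (Filter.cocompact ℝ) Filter.atTop ∧
      StrictConvexOn ℝ Set.univ (fun t => rowObj ν G U u v t))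
    -- `tstar u v` is the unique minimizer of the row objective
    (tstar : ℝ → ℝ → ℝ)
    (htstar : ∀ u ∈ Set.Icc 0 C, ∀ v ∈ Set.Icc 0 C, ¬(u = 0 ∧ v = 0) →
      (∀ s : ℝ, rowObj ν G U u v (tstar u v) ≤ rowObj ν G U u v s) ∧
      (∀ t : ℝ, (∀ s : ℝ, rowObj ν G U u v t ≤ rowObj ν G U u v s) → t = tstar u v)) :
    ∀ u ∈ Set.Ioo (0 : ℝ) C, ∀ v ∈ Set.Ioo (0 : ℝ) C,
      HasDerivAt (fun v' => expertSummary ν G U u v')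
        (ν' v * G (tstar u v) * Phi1 (U (tstar u v))) v ∧
      0 < ν' v * G (tstar u v) * Phi1 (U (tstar u v)) :=
  danskin_derivative_expert_summary_general C ν ν' hνderiv hν'pos G U hGcont hGpos hUcont hQ2 tstar
    htstar
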